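/- arXiv:2512.21137 — 11 statements merged into one kernel-verified Lean document; each statement's English description precedes it below -/
import Mathlib

section
/- Let (P, 𝒪) be a semitopology and f, f' : P → 𝟛. Then (Quorum f) ⊓ (Contraquorum f') ≤ Someone (fun p ↦ f p ⊓ f' p) in the lattice 𝟛. -/
/-- The three truth values, encoded as `Fin 3` with `0 = F`, `1 = B`, `2 = T`. -/
abbrev TV : Type := Fin 3

/-- false -/ def tF : TV := 0
/-- both/byzantine -/ def tB : TV := 1
/-- true -/ def tT : TV := 2

/-- Negation on `TV`: `neg F = T`, `neg B = B`, `neg T = F`. -/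
def tneg (x : TV) : TV := ⟨2 - x.val, by omega⟩

/-- A semitopology: a collection of subsets containing the whole set and
closed under arbitrary unions. -/
structure Semitopology (P : Type*) where
  opens : Set (Set P)
  univ_mem : Set.univ ∈ opens
  sUnion_mem : ∀ S : Set (Set P), S ⊆ opens → ⋃₀ S ∈ opens

namespace Semitopology

variable {P : Type*}

noncomputable def Everyone (f : P → TV) : TV := ⨅ p, f p

noncomputable def Someone (f : P → TV) : TV := ⨆ p, f p

noncomputable def Quorum (S : Semitopology P) (f : P → TV) : TV :=
  ⨆ O ∈ {O | O ∈ S.opens ∧ O.Nonempty}, ⨅ p ∈ O, f p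

noncomputable def Contraquorum (S : Semitopology P) (f : P → TV) : TV :=
  ⨅ O ∈ {O | O ∈ S.opens ∧ O.Nonempty}, ⨆ p ∈ O, f p

/-- A semitopology is 3-twined when any three nonempty open sets have
nonempty intersection. -/
def ThreeTwined (S : Semitopology P) : Prop :=
  ∀ O₁ O₂ O₃ : Set P, O₁ ∈ S.opens → O₂ ∈ S.opens → O₃ ∈ S.opens →
    O₁.Nonempty → O₂.Nonempty → O₃.Nonempty → (O₁ ∩ O₂ ∩ O₃).Nonempty

end Semitopology

open Semitopology

theorem quorum_inf_contraquorum_le_someone_inf {P : Type*} (S : Semitopology P)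
    (f f' : P → TV) :
    S.Quorum f ⊓ S.Contraquorum f' ≤ Someone (fun p => f p ⊓ f' p) := by
  simp only [Quorum, iSup_inf_eq]
  refine iSup_le fun O => iSup_le fun hO => ?_
  calc (⨅ p ∈ O, f p) ⊓ S.Contraquorum f'
      ≤ (⨅ p ∈ O, f p) ⊓ ⨆ p ∈ O, f' p := by
        exact inf_le_inf_left _ (biInf_le _ hO)
    _ = ⨆ p ∈ O, (⨅ q ∈ O, f q) ⊓ f' p := by
        rw [inf_iSup_eq]; simp [inf_iSup_eq]
    _ ≤ Someone (fun p => f p ⊓ f' p) := by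
        refine iSup_le fun p => iSup_le fun hp => ?_
        refine le_trans (inf_le_inf_right _ (biInf_le _ hp)) ?_
        exact le_iSup (fun p => f p ⊓ f' p) p
end

section
/- Let (P, 𝒪) be a 3-twined semitopology and f, f' : P → 𝟛. Then (Quorum f) ⊓ (Quorum f') ≤ Contraquorum (fun p ↦ f p ⊓ f' p) in the lattice 𝟛. -/
open Semitopology

theorem threeTwined_quorum_inf_quorum_le_contraquorum {P : Type*}
    (S : Semitopology P) (h3t : S.ThreeTwined) (f f' : P → TV) :
    S.Quorum f ⊓ S.Quorum f' ≤ S.Contraquorum (fun p => f p ⊓ f' p) := by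
  rw [Semitopology.Contraquorum]
  refine le_iInf₂ fun O₃ hO₃ => ?_
  by_contra h
  push_neg at h
  rw [lt_inf_iff] at h
  obtain ⟨h1, h2⟩ := h
  rw [Semitopology.Quorum, lt_iSup_iff] at h1 h2
  obtain ⟨O₁, h1⟩ := h1
  obtain ⟨O₂, h2⟩ := h2
  rw [lt_iSup_iff] at h1 h2
  obtain ⟨⟨hO₁, hne₁⟩, h1⟩ := h1
  obtain ⟨⟨hO₂, hne₂⟩, h2⟩ := h2
  obtain ⟨p, hp⟩ := h3t O₁ O₂ O₃ hO₁ hO₂ hO₃.1 hne₁ hne₂ hO₃.2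
  have hf : _ < f p := lt_of_lt_of_le h1 (iInf₂_le p hp.1.1)
  have hf' : _ < f' p := lt_of_lt_of_le h2 (iInf₂_le p hp.1.2)
  have : (⨆ q ∈ O₃, f q ⊓ f' q) < f p ⊓ f' p := lt_inf_iff.mpr ⟨hf, hf'⟩
  exact absurd (le_iSup₂ (f := fun q (_ : q ∈ O₃) => f q ⊓ f' q) p hp.2)
    (not_le_of_gt this)
end

section
/- Let (P, 𝒪) be a semitopology. If for every pair of functions f, f' : P → 𝟛 we have (Quorum f) ⊓ (Quorum f') ≤ Contraquorum (fun p ↦ f p ⊓ f' p), then (P, 𝒪) is 3-twined, i.e. any three nonempty members of 𝒪 have nonempty intersection. -/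
open Semitopology

theorem threeTwined_of_quorum_inf_quorum_le_contraquorum {P : Type*}
    (S : Semitopology P)
    (h : ∀ f f' : P → TV, S.Quorum f ⊓ S.Quorum f' ≤ S.Contraquorum (fun p => f p ⊓ f' p)) :
    S.ThreeTwined := by
  intro O₁ O₂ O₃ h₁ h₂ h₃ n₁ n₂ n₃
  classical
  set f : P → TV := fun p => if p ∈ O₁ then 2 else 0 with hf
  set f' : P → TV := fun p => if p ∈ O₂ then 2 else 0 with hf'
  have hq1 : (2 : TV) ≤ S.Quorum f := by
    refine le_trans ?_ (le_biSup _ (show O₁ ∈ {O | O ∈ S.opens ∧ O.Nonempty} from ⟨h₁, n₁⟩))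
    refine le_iInf fun p => le_iInf fun hp => ?_
    simp [hf, hp]
  have hq2 : (2 : TV) ≤ S.Quorum f' := by
    refine le_trans ?_ (le_biSup _ (show O₂ ∈ {O | O ∈ S.opens ∧ O.Nonempty} from ⟨h₂, n₂⟩))
    refine le_iInf fun p => le_iInf fun hp => ?_
    simp [hf', hp]
  have hcq : (2 : TV) ≤ ⨆ p ∈ O₃, (f p ⊓ f' p) := by
    refine le_trans (le_inf hq1 hq2) (le_trans (h f f') ?_)
    exact biInf_le _ (show O₃ ∈ {O | O ∈ S.opens ∧ O.Nonempty} from ⟨h₃, n₃⟩)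
  have h1 : (1 : TV) < ⨆ p ∈ O₃, (f p ⊓ f' p) := lt_of_lt_of_le (by decide) hcq
  rw [lt_iSup_iff] at h1
  obtain ⟨p, hp⟩ := h1
  rw [lt_iSup_iff] at hp
  obtain ⟨hp3, hpv⟩ := hp
  have hval1 : (1 : TV) < f p := lt_of_lt_of_le hpv inf_le_left
  have hval2 : (1 : TV) < f' p := lt_of_lt_of_le hpv inf_le_right
  have hp1 : p ∈ O₁ := by
    by_contra hc
    simp [hf, hc] at hval1
  have hp2 : p ∈ O₂ := by
    by_contra hc
    simp [hf', hc] at hval2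
  exact ⟨p, ⟨hp1, hp2⟩, hp3⟩
end

section
/- Let (P, 𝒪) be a 3-twined semitopology and f, f' : P → 𝟛. Then Quorum (fun p ↦ f p ⊔ f' p) ≤ (Contraquorum f) ⊔ (Contraquorum f') in the lattice 𝟛. In particular, if Quorum (fun p ↦ f p ⊔ f' p) ≥ B then (Contraquorum f) ⊔ (Contraquorum f') ≥ B. -/
open Semitopology

theorem quorum_sup_le_contraquorum_sup_contraquorum {P : Type*}
    (S : Semitopology P) (h3t : S.ThreeTwined) (f f' : P → TV) :
    S.Quorum (fun p => f p ⊔ f' p) ≤ S.Contraquorum f ⊔ S.Contraquorum f' ∧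
    (tB ≤ S.Quorum (fun p => f p ⊔ f' p) → tB ≤ S.Contraquorum f ⊔ S.Contraquorum f') := by
  have main : S.Quorum (fun p => f p ⊔ f' p) ≤ S.Contraquorum f ⊔ S.Contraquorum f' := by
    apply iSup₂_le
    intro O hO
    by_contra h
    push_neg at h
    have h1 : S.Contraquorum f < ⨅ p ∈ O, (f p ⊔ f' p) :=
      lt_of_le_of_lt le_sup_left h
    have h2 : S.Contraquorum f' < ⨅ p ∈ O, (f p ⊔ f' p) :=
      lt_of_le_of_lt le_sup_right h
    rw [Contraquorum, iInf_lt_iff] at h1 h2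
    obtain ⟨O₁, h1⟩ := h1
    rw [iInf_lt_iff] at h1
    obtain ⟨hO₁, h1⟩ := h1
    obtain ⟨O₂, h2⟩ := h2
    rw [iInf_lt_iff] at h2
    obtain ⟨hO₂, h2⟩ := h2
    obtain ⟨q, hq⟩ := h3t O O₁ O₂ hO.1 hO₁.1 hO₂.1 hO.2 hO₁.2 hO₂.2
    have hle : (⨅ p ∈ O, (f p ⊔ f' p)) ≤ f q ⊔ f' q := iInf₂_le q hq.1.1
    have hlt : f q ⊔ f' q < ⨅ p ∈ O, (f p ⊔ f' p) := by
      apply sup_lt_iff.mpr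
      exact ⟨lt_of_le_of_lt (le_iSup₂ (f := fun p _ => f p) q hq.1.2) h1,
        lt_of_le_of_lt (le_iSup₂ (f := fun p _ => f' p) q hq.2) h2⟩
    exact absurd (lt_of_le_of_lt hle hlt) (lt_irrefl _)
  exact ⟨main, fun h => le_trans h main⟩
end

section
/- (Agreement for the simple voting protocol.) Under the voting hypotheses, it is impossible that one participant observes true and another observes false: there do not exist p, p' ∈ P with decide p = T and decide p' = F. -/
open Semitopology

theorem voting_agreement {P : Type*} (S : Semitopology P) (vote decide : P → TV)
    (hObserve : ∀ p, decide p = tT → tB ≤ S.Quorum vote)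
    (hObserveNeg : ∀ p, decide p = tF → tB ≤ S.Quorum (fun q => tneg (vote q)))
    (hObserveBang : S.Quorum vote = tT → ∀ p, decide p = tT)
    (hObserveNegBang : S.Quorum (fun q => tneg (vote q)) = tT → ∀ p, decide p = tF)
    (hCorrect : ∃ O ∈ S.opens, O.Nonempty ∧ ∀ q ∈ O, vote q ≠ tB)
    (h3twined : ∀ f f' : P → TV,
        S.Quorum f ⊓ S.Quorum f' ≤ S.Contraquorum (fun p => f p ⊓ f' p)) :
    ¬ ∃ p p' : P, decide p = tT ∧ decide p' = tF := by
  rintro ⟨p, p', hp, hp'⟩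
  have h1 := hObserve p hp
  have h2 := hObserveNeg p' hp'
  have hle : tB ≤ S.Contraquorum (fun q => vote q ⊓ tneg (vote q)) :=
    le_trans (le_inf h1 h2) (h3twined _ _)
  obtain ⟨O, hO, hOne, hOc⟩ := hCorrect
  have hmem : O ∈ {O | O ∈ S.opens ∧ O.Nonempty} := ⟨hO, hOne⟩
  have hcq : S.Contraquorum (fun q => vote q ⊓ tneg (vote q)) ≤
      ⨆ q ∈ O, (vote q ⊓ tneg (vote q)) := iInf₂_le O hmem
  have hsup : (⨆ q ∈ O, (vote q ⊓ tneg (vote q))) ≤ tF := by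
    apply iSup₂_le
    intro q hq
    have hne := hOc q hq
    have : ∀ x : TV, x ≠ tB → x ⊓ tneg x = tF := by decide
    rw [this _ hne]
  have : tB ≤ tF := le_trans hle (le_trans hcq hsup)
  exact absurd this (by decide)
end

section
/- Under the Bracha Broadcast hypotheses, for every v ∈ Val: if Someone broadcastᵥ = T, then echo p v ≥ B for every p ∈ P. -/
open Semitopology


lemma TV_exB {ι : Sort*} (f : ι → TV) (h : tB ≤ ⨆ i, f i) : ∃ i, tB ≤ f i := by
  by_contra h'
  push_neg at h'
  have hle : (⨆ i, f i) ≤ tF := iSup_le fun i => by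
    have := h' i
    simp [tB, tF, Fin.lt_def, Fin.le_def] at *
    omega
  have : tB ≤ tF := le_trans h hle
  simp [tB, tF, Fin.le_def] at this

lemma TV_exT {ι : Sort*} (f : ι → TV) (h : (⨆ i, f i) = tT) : ∃ i, f i = tT := by
  by_contra h'
  push_neg at h'
  have hle : (⨆ i, f i) ≤ tB := iSup_le fun i => by
    have h2 := h' i
    have : f i ≤ tT := by simp [tT, Fin.le_def]; omega
    rcases lt_or_eq_of_le this with hlt | he
    · simp [tB, tT, Fin.lt_def, Fin.le_def] at *; omega
    · exact absurd he h2
  rw [h] at hle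
  simp [tB, tT, Fin.le_def] at hle

theorem bracha_broadcast_echo {P Val : Type*} [Nonempty Val] (S : Semitopology P)
    (broadcast echo ready deliver : P → Val → TV)
    (h3t : S.ThreeTwined)
    (hDeliverQ : ∀ p v, deliver p v = tT → tB ≤ S.Quorum (fun q => ready q v))
    (hReadyQ : ∀ p v, ready p v = tT → tB ≤ S.Quorum (fun q => echo q v))
    (hEchoQ : ∀ p v, echo p v = tT → tB ≤ Someone (fun q => broadcast q v))
    (hDeliverB : ∀ p v, S.Quorum (fun q => ready q v) = tT → tB ≤ deliver p v)
    (hReadyB : ∀ p v, S.Quorum (fun q => echo q v) = tT → tB ≤ ready p v)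
    (hEchoB : ∀ p v, Someone (fun q => broadcast q v) = tT → tB ≤ ⨆ v'' : Val, echo p v'')
    (hReadyBB : ∀ p v, S.Contraquorum (fun q => ready q v) = tT → tB ≤ ready p v)
    (hEcho01 : ∀ p (v v' : Val), echo p v = tT → echo p v' = tT → v = v')
    (hBroadcast1a : ∃ v'' : Val, tB ≤ Someone (fun q => broadcast q v''))
    (hBroadcast1b : ∀ v v' : Val, Someone (fun q => broadcast q v) = tT →
        Someone (fun q => broadcast q v') = tT → v = v')
    (hCorrectReady : ∃ O ∈ S.opens, O.Nonempty ∧ ∀ q ∈ O, ∀ v'' : Val, ready q v'' ≠ tB)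
    (hCorrectEcho : ∃ O ∈ S.opens, O.Nonempty ∧ ∀ q ∈ O, ∀ v'' : Val, echo q v'' ≠ tB)
    (hCorrectReady' : ∀ p, (∀ v'' : Val, ready p v'' ≠ tB) ∨ (∀ v'' : Val, ready p v'' = tB))
    (hCorrectEcho' : ∀ p, (∀ v'' : Val, echo p v'' ≠ tB) ∨ (∀ v'' : Val, echo p v'' = tB))
    (hCorrectBroadcast : (∀ (q : P) (v'' : Val), broadcast q v'' ≠ tB) ∨
        (∀ (q : P) (v'' : Val), broadcast q v'' = tB)) :
    ∀ v : Val, Someone (fun q => broadcast q v) = tT → ∀ p : P, tB ≤ echo p v := by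
  intro v hv p
  have hsup : tB ≤ ⨆ v'' : Val, echo p v'' := hEchoB p v hv
  rcases hCorrectEcho' p with hne | hB
  · obtain ⟨v'', hv''⟩ := TV_exB _ hsup
    have hT : echo p v'' = tT := by
      have hle : echo p v'' ≤ tT := by simp [tT, Fin.le_def]; omega
      rcases lt_or_eq_of_le hle with hlt | he
      · exfalso
        apply hne v''
        have h1 := hv''
        simp only [tB, tT, Fin.lt_def, Fin.le_def, Fin.ext_iff] at h1 hlt ⊢
        omega
      · exact he
    have hsb : tB ≤ Someone (fun q => broadcast q v'') := hEchoQ p v'' hT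
    have hsbT : Someone (fun q => broadcast q v'') = tT := by
      rcases lt_or_eq_of_le (show Someone (fun q => broadcast q v'') ≤ tT by
        simp [tT, Fin.le_def]; omega) with hlt | he
      · exfalso
        -- Someone broadcast v'' = tB, so some q has broadcast q v'' = tB
        obtain ⟨q, hq⟩ := TV_exB (fun q => broadcast q v'') hsb
        have hqB : broadcast q v'' = tB := by
          have h1 : broadcast q v'' < tT :=
            lt_of_le_of_lt (le_iSup (fun q => broadcast q v'') q) hlt
          simp only [tB, tT, Fin.lt_def, Fin.le_def, Fin.ext_iff] at h1 hq ⊢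
          omega
        rcases hCorrectBroadcast with hnb | hab
        · exact hnb q v'' hqB
        · obtain ⟨q', hq'⟩ := TV_exT (fun q => broadcast q v) hv
          rw [hab q' v] at hq'
          simp [tB, tT] at hq'
      · exact he
    have : v'' = v := hBroadcast1b v'' v hsbT hv
    rw [← this, hT]
    simp [tB, tT, Fin.le_def]
  · rw [hB v]
end

section
/- Under the Bracha Broadcast hypotheses, for every v ∈ Val: (1) if echo p v ≥ B for every p ∈ P, then Quorum echoᵥ = T; and (2) if ready p v ≥ B for every p ∈ P, then Quorum readyᵥ = T. -/
open Semitopology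

theorem bracha_everyone_to_quorum_true {P Val : Type*} [Nonempty Val] (S : Semitopology P)
    (broadcast echo ready deliver : P → Val → TV)
    (h3t : S.ThreeTwined)
    (hDeliverQ : ∀ p v, deliver p v = tT → tB ≤ S.Quorum (fun q => ready q v))
    (hReadyQ : ∀ p v, ready p v = tT → tB ≤ S.Quorum (fun q => echo q v))
    (hEchoQ : ∀ p v, echo p v = tT → tB ≤ Someone (fun q => broadcast q v))
    (hDeliverB : ∀ p v, S.Quorum (fun q => ready q v) = tT → tB ≤ deliver p v)
    (hReadyB : ∀ p v, S.Quorum (fun q => echo q v) = tT → tB ≤ ready p v)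
    (hEchoB : ∀ p v, Someone (fun q => broadcast q v) = tT → tB ≤ ⨆ v'' : Val, echo p v'')
    (hReadyBB : ∀ p v, S.Contraquorum (fun q => ready q v) = tT → tB ≤ ready p v)
    (hEcho01 : ∀ p (v v' : Val), echo p v = tT → echo p v' = tT → v = v')
    (hBroadcast1a : ∃ v'' : Val, tB ≤ Someone (fun q => broadcast q v''))
    (hBroadcast1b : ∀ v v' : Val, Someone (fun q => broadcast q v) = tT →
        Someone (fun q => broadcast q v') = tT → v = v')
    (hCorrectReady : ∃ O ∈ S.opens, O.Nonempty ∧ ∀ q ∈ O, ∀ v'' : Val, ready q v'' ≠ tB)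
    (hCorrectEcho : ∃ O ∈ S.opens, O.Nonempty ∧ ∀ q ∈ O, ∀ v'' : Val, echo q v'' ≠ tB)
    (hCorrectReady' : ∀ p, (∀ v'' : Val, ready p v'' ≠ tB) ∨ (∀ v'' : Val, ready p v'' = tB))
    (hCorrectEcho' : ∀ p, (∀ v'' : Val, echo p v'' ≠ tB) ∨ (∀ v'' : Val, echo p v'' = tB))
    (hCorrectBroadcast : (∀ (q : P) (v'' : Val), broadcast q v'' ≠ tB) ∨
        (∀ (q : P) (v'' : Val), broadcast q v'' = tB)) :
    ∀ v : Val,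
      ((∀ p : P, tB ≤ echo p v) → S.Quorum (fun q => echo q v) = tT) ∧
      ((∀ p : P, tB ≤ ready p v) → S.Quorum (fun q => ready q v) = tT) := by

  have htop : ∀ x : TV, x ≤ tT := by decide
  have hBT : ∀ x : TV, tB ≤ x → x ≠ tB → x = tT := by decide
  have key : ∀ f : P → TV, ∀ O, O ∈ S.opens → O.Nonempty → (∀ p ∈ O, f p = tT) →
      S.Quorum f = tT := by
    intro f O hO hne hT
    apply le_antisymm
    · exact iSup₂_le fun _ _ => htop _
    · refine le_trans ?_ (le_iSup₂ (f := fun O _ => ⨅ p ∈ O, f p) O ⟨hO, hne⟩)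
      exact le_iInf₂ fun p hp => (hT p hp).ge
  intro v
  constructor
  · intro hall
    obtain ⟨O, hO, hne, hcor⟩ := hCorrectEcho
    exact key _ O hO hne fun p hp => hBT _ (hall p) (hcor p hp v)
  · intro hall
    obtain ⟨O, hO, hne, hcor⟩ := hCorrectReady
    exact key _ O hO hne fun p hp => hBT _ (hall p) (hcor p hp v)
end

section
/- (Validity of Bracha Broadcast.) Under the Bracha Broadcast hypotheses, for every v ∈ Val: if Someone broadcastᵥ = T, then deliver p v ≥ B for every p ∈ P. -/
open Semitopology

theorem bracha_validity {P Val : Type*} [Nonempty Val] (S : Semitopology P)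
    (broadcast echo ready deliver : P → Val → TV)
    (h3t : S.ThreeTwined)
    (hDeliverQ : ∀ p v, deliver p v = tT → tB ≤ S.Quorum (fun q => ready q v))
    (hReadyQ : ∀ p v, ready p v = tT → tB ≤ S.Quorum (fun q => echo q v))
    (hEchoQ : ∀ p v, echo p v = tT → tB ≤ Someone (fun q => broadcast q v))
    (hDeliverB : ∀ p v, S.Quorum (fun q => ready q v) = tT → tB ≤ deliver p v)
    (hReadyB : ∀ p v, S.Quorum (fun q => echo q v) = tT → tB ≤ ready p v)
    (hEchoB : ∀ p v, Someone (fun q => broadcast q v) = tT → tB ≤ ⨆ v'' : Val, echo p v'')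
    (hReadyBB : ∀ p v, S.Contraquorum (fun q => ready q v) = tT → tB ≤ ready p v)
    (hEcho01 : ∀ p (v v' : Val), echo p v = tT → echo p v' = tT → v = v')
    (hBroadcast1a : ∃ v'' : Val, tB ≤ Someone (fun q => broadcast q v''))
    (hBroadcast1b : ∀ v v' : Val, Someone (fun q => broadcast q v) = tT →
        Someone (fun q => broadcast q v') = tT → v = v')
    (hCorrectReady : ∃ O ∈ S.opens, O.Nonempty ∧ ∀ q ∈ O, ∀ v'' : Val, ready q v'' ≠ tB)
    (hCorrectEcho : ∃ O ∈ S.opens, O.Nonempty ∧ ∀ q ∈ O, ∀ v'' : Val, echo q v'' ≠ tB)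
    (hCorrectReady' : ∀ p, (∀ v'' : Val, ready p v'' ≠ tB) ∨ (∀ v'' : Val, ready p v'' = tB))
    (hCorrectEcho' : ∀ p, (∀ v'' : Val, echo p v'' ≠ tB) ∨ (∀ v'' : Val, echo p v'' = tB))
    (hCorrectBroadcast : (∀ (q : P) (v'' : Val), broadcast q v'' ≠ tB) ∨
        (∀ (q : P) (v'' : Val), broadcast q v'' = tB)) :
    ∀ v : Val, Someone (fun q => broadcast q v) = tT → ∀ p : P, tB ≤ deliver p v := by

  intro v hv p
  have hle : ∀ x : TV, x ≤ tT := by decide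
  have hbx : ∀ x : TV, tB ≤ x ↔ tF < x := by decide
  have hnbT : ∀ x : TV, tF < x → x ≠ tB → x = tT := by decide
  have hbT : ∀ x : TV, tB ≤ x → x ≠ tB → x = tT := by decide
  -- someone broadcast v is top, so some q broadcasts v truly
  have hlt : tB < Someone (fun q => broadcast q v) := by rw [hv]; decide
  obtain ⟨q0, hq0⟩ := lt_iSup_iff.mp hlt
  have hnb : ∀ (q : P) (v'' : Val), broadcast q v'' ≠ tB := by
    rcases hCorrectBroadcast with h | h
    · exact h
    · simp only [h] at hq0; exact (lt_irrefl _ hq0).elim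
  -- echo quorum
  obtain ⟨O', hO'open, hO'ne, hO'echo⟩ := hCorrectEcho
  have hechoT : ∀ q ∈ O', echo q v = tT := by
    intro q hq
    have h1 : tF < ⨆ v'' : Val, echo q v'' := (hbx _).mp (hEchoB q v hv)
    obtain ⟨v'', hv''⟩ := lt_iSup_iff.mp h1
    have hE : echo q v'' = tT := hnbT _ hv'' (hO'echo q hq v'')
    have h2 : tF < Someone (fun q' => broadcast q' v'') := (hbx _).mp (hEchoQ q v'' hE)
    obtain ⟨q', hq'⟩ := lt_iSup_iff.mp h2
    have hb' : broadcast q' v'' = tT := hnbT _ hq' (hnb q' v'')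
    have hsb : Someone (fun q' => broadcast q' v'') = tT :=
      le_antisymm (iSup_le fun _ => hle _) (le_iSup_of_le q' hb'.ge)
    rwa [hBroadcast1b v'' v hsb hv] at hE
  have hQe : S.Quorum (fun q => echo q v) = tT := by
    refine le_antisymm (iSup₂_le fun O hO => hle _) ?_
    exact le_iSup₂_of_le O' ⟨hO'open, hO'ne⟩ (le_iInf₂ fun q hq => (hechoT q hq).ge)
  have hready : ∀ p' : P, tB ≤ ready p' v := fun p' => hReadyB p' v hQe
  obtain ⟨O, hOopen, hOne, hOready⟩ := hCorrectReady
  have hQr : S.Quorum (fun q => ready q v) = tT := by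
    refine le_antisymm (iSup₂_le fun O hO => hle _) ?_
    exact le_iSup₂_of_le O ⟨hOopen, hOne⟩
      (le_iInf₂ fun q hq => (hbT _ (hready q) (hOready q hq v)).ge)
  exact hDeliverB p v hQr
end

section
/- Under the Bracha Broadcast hypotheses, for all v, v' ∈ Val: (1) if Quorum readyᵥ ≥ B then Contraquorum readyᵥ = T; (2) if Quorum echoᵥ ≥ B and Quorum echo_{v'} ≥ B then Someone (fun q ↦ echo q v ⊓ echo q v') = T; (3) if Quorum readyᵥ ≥ B and Quorum ready_{v'} ≥ B then Someone (fun q ↦ ready q v ⊓ ready q v') = T. -/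
open Semitopology

lemma TV_le_tT : ∀ x : TV, x ≤ tT := by decide

lemma TV_to_tT : ∀ x : TV, tB ≤ x → x ≠ tB → x = tT := by decide

lemma TV_lt_tB : ∀ x : TV, x < tB → x ≤ tF := by decide

lemma TV_not_le : ∀ x : TV, ¬ tB ≤ tF := by decide

lemma quorum_witness {P : Type*} (S : Semitopology P) (f : P → TV)
    (h : tB ≤ S.Quorum f) :
    ∃ O ∈ S.opens, O.Nonempty ∧ ∀ p ∈ O, tB ≤ f p := by
  by_contra hc
  push_neg at hc
  have hle : S.Quorum f ≤ tF := by
    apply iSup₂_le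
    rintro O ⟨hO, hne⟩
    obtain ⟨p, hp, hfp⟩ := hc O hO hne
    calc ⨅ p ∈ O, f p ≤ f p := biInf_le f hp
      _ ≤ tF := TV_lt_tB _ hfp
  exact TV_not_le tF (le_trans h hle)


theorem bracha_box_diamond {P Val : Type*} [Nonempty Val] (S : Semitopology P)
    (broadcast echo ready deliver : P → Val → TV)
    (h3t : S.ThreeTwined)
    (hDeliverQ : ∀ p v, deliver p v = tT → tB ≤ S.Quorum (fun q => ready q v))
    (hReadyQ : ∀ p v, ready p v = tT → tB ≤ S.Quorum (fun q => echo q v))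
    (hEchoQ : ∀ p v, echo p v = tT → tB ≤ Someone (fun q => broadcast q v))
    (hDeliverB : ∀ p v, S.Quorum (fun q => ready q v) = tT → tB ≤ deliver p v)
    (hReadyB : ∀ p v, S.Quorum (fun q => echo q v) = tT → tB ≤ ready p v)
    (hEchoB : ∀ p v, Someone (fun q => broadcast q v) = tT → tB ≤ ⨆ v'' : Val, echo p v'')
    (hReadyBB : ∀ p v, S.Contraquorum (fun q => ready q v) = tT → tB ≤ ready p v)
    (hEcho01 : ∀ p (v v' : Val), echo p v = tT → echo p v' = tT → v = v')
    (hBroadcast1a : ∃ v'' : Val, tB ≤ Someone (fun q => broadcast q v''))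
    (hBroadcast1b : ∀ v v' : Val, Someone (fun q => broadcast q v) = tT →
        Someone (fun q => broadcast q v') = tT → v = v')
    (hCorrectReady : ∃ O ∈ S.opens, O.Nonempty ∧ ∀ q ∈ O, ∀ v'' : Val, ready q v'' ≠ tB)
    (hCorrectEcho : ∃ O ∈ S.opens, O.Nonempty ∧ ∀ q ∈ O, ∀ v'' : Val, echo q v'' ≠ tB)
    (hCorrectReady' : ∀ p, (∀ v'' : Val, ready p v'' ≠ tB) ∨ (∀ v'' : Val, ready p v'' = tB))
    (hCorrectEcho' : ∀ p, (∀ v'' : Val, echo p v'' ≠ tB) ∨ (∀ v'' : Val, echo p v'' = tB))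
    (hCorrectBroadcast : (∀ (q : P) (v'' : Val), broadcast q v'' ≠ tB) ∨
        (∀ (q : P) (v'' : Val), broadcast q v'' = tB)) :
    ∀ v v' : Val,
      (tB ≤ S.Quorum (fun q => ready q v) → S.Contraquorum (fun q => ready q v) = tT) ∧
      (tB ≤ S.Quorum (fun q => echo q v) → tB ≤ S.Quorum (fun q => echo q v') →
        Someone (fun q => echo q v ⊓ echo q v') = tT) ∧
      (tB ≤ S.Quorum (fun q => ready q v) → tB ≤ S.Quorum (fun q => ready q v') →
        Someone (fun q => ready q v ⊓ ready q v') = tT) := by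
  intro v v'
  obtain ⟨Or, hOr, hOrne, hOrc⟩ := hCorrectReady
  obtain ⟨Oe, hOe, hOene, hOec⟩ := hCorrectEcho
  refine ⟨?_, ?_, ?_⟩
  · intro hq
    obtain ⟨O, hO, hOne, hOb⟩ := quorum_witness S _ hq
    refine le_antisymm (TV_le_tT _) (le_iInf₂ ?_)
    rintro O' ⟨hO', hO'ne⟩
    obtain ⟨p, hp⟩ := h3t O O' Or hO hO' hOr hOne hO'ne hOrne
    have hpt : ready p v = tT :=
      TV_to_tT _ (hOb p hp.1.1) (hOrc p hp.2 v)
    calc tT = ready p v := hpt.symm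
      _ ≤ ⨆ q ∈ O', ready q v := le_biSup (fun q => ready q v) hp.1.2
  · intro h1 h2
    obtain ⟨O1, hO1, hO1ne, hb1⟩ := quorum_witness S _ h1
    obtain ⟨O2, hO2, hO2ne, hb2⟩ := quorum_witness S _ h2
    obtain ⟨p, hp⟩ := h3t O1 O2 Oe hO1 hO2 hOe hO1ne hO2ne hOene
    have e1 : echo p v = tT := TV_to_tT _ (hb1 p hp.1.1) (hOec p hp.2 v)
    have e2 : echo p v' = tT := TV_to_tT _ (hb2 p hp.1.2) (hOec p hp.2 v')
    refine le_antisymm (TV_le_tT _) ?_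
    have : tT = echo p v ⊓ echo p v' := by simp [e1, e2]
    rw [this, Someone]
    exact le_iSup (fun q => echo q v ⊓ echo q v') p
  · intro h1 h2
    obtain ⟨O1, hO1, hO1ne, hb1⟩ := quorum_witness S _ h1
    obtain ⟨O2, hO2, hO2ne, hb2⟩ := quorum_witness S _ h2
    obtain ⟨p, hp⟩ := h3t O1 O2 Or hO1 hO2 hOr hO1ne hO2ne hOrne
    have e1 : ready p v = tT := TV_to_tT _ (hb1 p hp.1.1) (hOrc p hp.2 v)
    have e2 : ready p v' = tT := TV_to_tT _ (hb2 p hp.1.2) (hOrc p hp.2 v')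
    refine le_antisymm (TV_le_tT _) ?_
    have : tT = ready p v ⊓ ready p v' := by simp [e1, e2]
    rw [this, Someone]
    exact le_iSup (fun q => ready q v ⊓ ready q v') p
end

section
/- (Integrity of Bracha Broadcast.) Under the Bracha Broadcast hypotheses, for every p ∈ P and v ∈ Val: if deliver p v = T then Someone broadcastᵥ ≥ B. -/
open Semitopology

/-!
A delivery of `v` is backed by a quorum whose members are at least weakly ready for `v`. Since
quorums intersect, this quorum meets the quorum of correct participants (whose values are never
`B`), and a correct member of both is ready for `v` with value `T`. The same argument, one level
down, yields a correct participant echoing `v` with value `T`, and such an echo is only possible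
if someone broadcast `v`.
-/

lemma tB_le_iff_tF_lt {x : TV} : tB ≤ x ↔ tF < x := by
  simp only [tB, tF, Fin.le_def, Fin.lt_def]
  omega

lemma eq_tT_of_tB_le_of_ne {x : TV} (h : tB ≤ x) (hB : x ≠ tB) : x = tT := by
  simp only [tB, tT, Fin.le_def, ne_eq, Fin.ext_iff] at h hB ⊢
  omega

lemma tB_le_iSup_iff {ι : Sort*} {f : ι → TV} : tB ≤ ⨆ i, f i ↔ ∃ i, tB ≤ f i := by
  simp only [tB_le_iff_tF_lt, lt_iSup_iff]

namespace Semitopology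

variable {P : Type*} {S : Semitopology P}

lemma exists_open_of_tB_le_quorum {f : P → TV} (h : tB ≤ S.Quorum f) :
    ∃ O ∈ S.opens, O.Nonempty ∧ ∀ q ∈ O, tB ≤ f q := by
  obtain ⟨O, hO⟩ := tB_le_iSup_iff.mp h
  obtain ⟨⟨hOopen, hOne⟩, hOf⟩ := tB_le_iSup_iff.mp hO
  exact ⟨O, hOopen, hOne, fun q hq => hOf.trans ((iInf_le _ q).trans (iInf_le _ hq))⟩

lemma ThreeTwined.inter_nonempty (h3t : S.ThreeTwined) {O₁ O₂ : Set P}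
    (h₁ : O₁ ∈ S.opens) (h₂ : O₂ ∈ S.opens) (hne₁ : O₁.Nonempty) (hne₂ : O₂.Nonempty) :
    (O₁ ∩ O₂).Nonempty := by
  simpa [Set.inter_assoc] using h3t O₁ O₂ O₂ h₁ h₂ h₂ hne₁ hne₂ hne₂

lemma ThreeTwined.exists_eq_tT_of_tB_le_quorum (h3t : S.ThreeTwined) {f : P → TV}
    (hf : tB ≤ S.Quorum f) {O : Set P} (hO : O ∈ S.opens) (hOne : O.Nonempty)
    (hOf : ∀ q ∈ O, f q ≠ tB) : ∃ q, f q = tT := by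
  obtain ⟨O', hO', hO'ne, hO'f⟩ := exists_open_of_tB_le_quorum hf
  obtain ⟨q, hqO', hqO⟩ := h3t.inter_nonempty hO' hO hO'ne hOne
  exact ⟨q, eq_tT_of_tB_le_of_ne (hO'f q hqO') (hOf q hqO)⟩

end Semitopology

theorem bracha_integrity_general {P Val : Type*} (S : Semitopology P)
    (broadcast echo ready deliver : P → Val → TV)
    (h3t : S.ThreeTwined)
    (hDeliverQ : ∀ p v, deliver p v = tT → tB ≤ S.Quorum (fun q => ready q v))
    (hReadyQ : ∀ p v, ready p v = tT → tB ≤ S.Quorum (fun q => echo q v))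
    (hEchoQ : ∀ p v, echo p v = tT → tB ≤ Someone (fun q => broadcast q v))
    (hCorrectReady : ∃ O ∈ S.opens, O.Nonempty ∧ ∀ q ∈ O, ∀ v'' : Val, ready q v'' ≠ tB)
    (hCorrectEcho : ∃ O ∈ S.opens, O.Nonempty ∧ ∀ q ∈ O, ∀ v'' : Val, echo q v'' ≠ tB) :
    ∀ (p : P) (v : Val), deliver p v = tT → tB ≤ Someone (fun q => broadcast q v) := by
  intro p v hdeliver
  obtain ⟨Oready, hOready, hOreadyne, hready⟩ := hCorrectReady
  obtain ⟨Oecho, hOecho, hOechone, hecho⟩ := hCorrectEcho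
  obtain ⟨q, hq⟩ := h3t.exists_eq_tT_of_tB_le_quorum (hDeliverQ p v hdeliver)
    hOready hOreadyne fun q hq => hready q hq v
  obtain ⟨q', hq'⟩ := h3t.exists_eq_tT_of_tB_le_quorum (hReadyQ q v hq)
    hOecho hOechone fun q hq => hecho q hq v
  exact hEchoQ q' v hq'

theorem bracha_integrity {P Val : Type*} [Nonempty Val] (S : Semitopology P)
    (broadcast echo ready deliver : P → Val → TV)
    (h3t : S.ThreeTwined)
    (hDeliverQ : ∀ p v, deliver p v = tT → tB ≤ S.Quorum (fun q => ready q v))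
    (hReadyQ : ∀ p v, ready p v = tT → tB ≤ S.Quorum (fun q => echo q v))
    (hEchoQ : ∀ p v, echo p v = tT → tB ≤ Someone (fun q => broadcast q v))
    (hDeliverB : ∀ p v, S.Quorum (fun q => ready q v) = tT → tB ≤ deliver p v)
    (hReadyB : ∀ p v, S.Quorum (fun q => echo q v) = tT → tB ≤ ready p v)
    (hEchoB : ∀ p v, Someone (fun q => broadcast q v) = tT → tB ≤ ⨆ v'' : Val, echo p v'')
    (hReadyBB : ∀ p v, S.Contraquorum (fun q => ready q v) = tT → tB ≤ ready p v)
    (hEcho01 : ∀ p (v v' : Val), echo p v = tT → echo p v' = tT → v = v')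
    (hBroadcast1a : ∃ v'' : Val, tB ≤ Someone (fun q => broadcast q v''))
    (hBroadcast1b : ∀ v v' : Val, Someone (fun q => broadcast q v) = tT →
        Someone (fun q => broadcast q v') = tT → v = v')
    (hCorrectReady : ∃ O ∈ S.opens, O.Nonempty ∧ ∀ q ∈ O, ∀ v'' : Val, ready q v'' ≠ tB)
    (hCorrectEcho : ∃ O ∈ S.opens, O.Nonempty ∧ ∀ q ∈ O, ∀ v'' : Val, echo q v'' ≠ tB)
    (hCorrectReady' : ∀ p, (∀ v'' : Val, ready p v'' ≠ tB) ∨ (∀ v'' : Val, ready p v'' = tB))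
    (hCorrectEcho' : ∀ p, (∀ v'' : Val, echo p v'' ≠ tB) ∨ (∀ v'' : Val, echo p v'' = tB))
    (hCorrectBroadcast : (∀ (q : P) (v'' : Val), broadcast q v'' ≠ tB) ∨
        (∀ (q : P) (v'' : Val), broadcast q v'' = tB)) :
    ∀ (p : P) (v : Val), deliver p v = tT → tB ≤ Someone (fun q => broadcast q v) :=
  bracha_integrity_general S broadcast echo ready deliver h3t hDeliverQ hReadyQ hEchoQ hCorrectReady
    hCorrectEcho
end

section
/- (Totality of Bracha Broadcast.) Under the Bracha Broadcast hypotheses, for every v ∈ Val: if Someone deliverᵥ = T, then deliver p v ≥ B for every p ∈ P. -/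
open Semitopology

lemma tv_le_tT (x : TV) : x ≤ tT := by
  rw [Fin.le_def]; have := x.isLt; simp [tT]; omega

lemma tv_exists_of_le_iSup {ι : Sort*} (b : TV) (hb : b ≠ 0) (f : ι → TV)
    (h : b ≤ ⨆ i, f i) : ∃ i, b ≤ f i := by
  by_contra hc
  push_neg at hc
  have hle : (⨆ i, f i) ≤ (⟨b.val - 1, by have := b.isLt; omega⟩ : TV) := by
    apply iSup_le
    intro i
    have hi := hc i
    rw [Fin.lt_def] at hi
    rw [Fin.le_def]
    simp only [Fin.val_mk]
    omega
  have h2 := le_trans h hle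
  rw [Fin.le_def] at h2
  have hb' : b.val ≠ 0 := fun e => hb (Fin.ext e)
  simp at h2
  omega

lemma tv_eq_tT_of (x : TV) (h1 : tB ≤ x) (h2 : x ≠ tB) : x = tT := by
  rw [Fin.le_def] at h1
  have hlt := x.isLt
  have : x.val ≠ 1 := fun e => h2 (Fin.ext e)
  apply Fin.ext
  simp [tB] at h1 this
  simp [tT]
  omega

theorem bracha_totality {P Val : Type*} [Nonempty Val] (S : Semitopology P)
    (broadcast echo ready deliver : P → Val → TV)
    (h3t : S.ThreeTwined)
    (hDeliverQ : ∀ p v, deliver p v = tT → tB ≤ S.Quorum (fun q => ready q v))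
    (hReadyQ : ∀ p v, ready p v = tT → tB ≤ S.Quorum (fun q => echo q v))
    (hEchoQ : ∀ p v, echo p v = tT → tB ≤ Someone (fun q => broadcast q v))
    (hDeliverB : ∀ p v, S.Quorum (fun q => ready q v) = tT → tB ≤ deliver p v)
    (hReadyB : ∀ p v, S.Quorum (fun q => echo q v) = tT → tB ≤ ready p v)
    (hEchoB : ∀ p v, Someone (fun q => broadcast q v) = tT → tB ≤ ⨆ v'' : Val, echo p v'')
    (hReadyBB : ∀ p v, S.Contraquorum (fun q => ready q v) = tT → tB ≤ ready p v)
    (hEcho01 : ∀ p (v v' : Val), echo p v = tT → echo p v' = tT → v = v')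
    (hBroadcast1a : ∃ v'' : Val, tB ≤ Someone (fun q => broadcast q v''))
    (hBroadcast1b : ∀ v v' : Val, Someone (fun q => broadcast q v) = tT →
        Someone (fun q => broadcast q v') = tT → v = v')
    (hCorrectReady : ∃ O ∈ S.opens, O.Nonempty ∧ ∀ q ∈ O, ∀ v'' : Val, ready q v'' ≠ tB)
    (hCorrectEcho : ∃ O ∈ S.opens, O.Nonempty ∧ ∀ q ∈ O, ∀ v'' : Val, echo q v'' ≠ tB)
    (hCorrectReady' : ∀ p, (∀ v'' : Val, ready p v'' ≠ tB) ∨ (∀ v'' : Val, ready p v'' = tB))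
    (hCorrectEcho' : ∀ p, (∀ v'' : Val, echo p v'' ≠ tB) ∨ (∀ v'' : Val, echo p v'' = tB))
    (hCorrectBroadcast : (∀ (q : P) (v'' : Val), broadcast q v'' ≠ tB) ∨
        (∀ (q : P) (v'' : Val), broadcast q v'' = tB)) :
    ∀ v : Val, Someone (fun q => deliver q v) = tT → ∀ p : P, tB ≤ deliver p v := by
  intro v hSome p
  -- extract a point that delivered
  obtain ⟨p₀, hp₀⟩ : ∃ q, tT ≤ deliver q v := by
    apply tv_exists_of_le_iSup tT (by decide)
    rw [Someone] at hSome
    rw [hSome]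
  have hp₀' : deliver p₀ v = tT := le_antisymm (tv_le_tT _) hp₀
  -- a quorum of ready ≥ B
  have hQ := hDeliverQ p₀ v hp₀'
  rw [Quorum] at hQ
  obtain ⟨O₁, hO₁⟩ := tv_exists_of_le_iSup tB (by decide) _ hQ
  obtain ⟨hO₁s, hO₁inf⟩ := tv_exists_of_le_iSup tB (by decide) _ hO₁
  have hO₁ready : ∀ q ∈ O₁, tB ≤ ready q v := by
    intro q hq
    exact le_trans hO₁inf (iInf₂_le q hq)
  obtain ⟨OR, hORopen, hORne, hORcorrect⟩ := hCorrectReady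
  -- Contraquorum ready v = T
  have hCQ : S.Contraquorum (fun q => ready q v) = tT := by
    refine le_antisymm (tv_le_tT _) ?_
    rw [Contraquorum]
    refine le_iInf₂ ?_
    intro O hO
    obtain ⟨hOopen, hOne⟩ := hO
    obtain ⟨q, hq⟩ := h3t O₁ OR O hO₁s.1 hORopen hOopen hO₁s.2 hORne hOne
    obtain ⟨⟨hq1, hqR⟩, hqO⟩ := hq
    have hqT : ready q v = tT :=
      tv_eq_tT_of _ (hO₁ready q hq1) (hORcorrect q hqR v)
    calc tT = ready q v := hqT.symm
      _ ≤ ⨆ q' ∈ O, ready q' v := le_iSup₂ (f := fun q' (_ : q' ∈ O) => ready q' v) q hqO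
  -- so everyone is ready
  have hAllReady : ∀ q, tB ≤ ready q v := fun q => hReadyBB q v hCQ
  -- the correct quorum is fully ready at T
  have hQT : S.Quorum (fun q => ready q v) = tT := by
    refine le_antisymm (tv_le_tT _) ?_
    rw [Quorum]
    have hinf : tT ≤ ⨅ q ∈ OR, ready q v := by
      refine le_iInf₂ ?_
      intro q hq
      exact le_of_eq (tv_eq_tT_of _ (hAllReady q) (hORcorrect q hq v)).symm
    exact le_trans hinf
      (le_iSup₂ (f := fun O (_ : O ∈ {O | O ∈ S.opens ∧ O.Nonempty}) => ⨅ q ∈ O, ready q v)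
        OR ⟨hORopen, hORne⟩)
  exact hDeliverB p v hQT
end
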